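/- Let n and m be positive integers, let F be the finite field with 2^m elements, and let D_{2n} be the dihedral group of order 4n (the symmetry group of a regular 2n-gon, generated by r, s with r^{2n} = s² = (rs)² = 1). Then the F-vector space Inn(F[D_{2n}]) of inner derivations of the group algebra F[D_{2n}] has dimension 3n − 3. -/

import Mathlib

open MonoidAlgebra

/-- The A-submodule of inner derivations of the group ring `A[G]`, inside the
`A`-module of all `A`-linear endomorphisms of `A[G]`. -/
def innDer (A G : Type) [CommRing A] [Group G] :
    Submodule A (MonoidAlgebra A G →ₗ[A] MonoidAlgebra A G) where
  carrier := {d | ∃ a : MonoidAlgebra A G, ∀ x : MonoidAlgebra A G, d x = a * x - x * a}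
  add_mem' := by
    rintro d e ⟨a, ha⟩ ⟨b, hb⟩
    refine ⟨a + b, fun x => ?_⟩
    simp only [LinearMap.add_apply, ha x, hb x, add_mul, mul_add]
    abel
  zero_mem' := ⟨0, fun x => by simp⟩
  smul_mem' := by
    rintro c d ⟨a, ha⟩
    refine ⟨c • a, fun x => ?_⟩
    simp only [LinearMap.smul_apply, ha x, smul_sub, smul_mul_assoc, mul_smul_comm]

/-!
Inner derivations are the image of `ad : a ↦ (x ↦ a * x - x * a)`, whose kernel is the centre of
`F[G]`: the elements with coefficients constant on conjugacy classes. Hence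
`dim Inn(F[G]) = |G| - #(conjugacy classes of G)`. In the dihedral group of order `4n`, the
rotation `r i` is conjugate exactly to `r i` and `r (-i)` (`n + 1` classes), and the reflection
`sr i` exactly to the `sr j` with `j ≡ i mod 2` (`2` classes), so `4n - (n + 3) = 3n - 3`.
-/

section Ad

variable (R A : Type*) [CommRing R] [Ring A] [Algebra R A]

noncomputable def ad : A →ₗ[R] Module.End R A :=
  LinearMap.mul R A - (LinearMap.mul R A).flip

variable {R A} in
lemma ad_apply (a x : A) : ad R A a x = a * x - x * a := rfl

end Ad

namespace MonoidAlgebra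

section CommRing

variable (F G : Type) [CommRing F] [Group G]

lemma innDer_eq_range_ad : innDer F G = LinearMap.range (ad F F[G]) := by
  ext d
  constructor
  · rintro ⟨a, ha⟩
    exact ⟨a, LinearMap.ext fun x => (ha x).symm⟩
  · rintro ⟨a, rfl⟩
    exact ⟨a, fun x => rfl⟩

variable {F G} in
lemma mem_ker_ad_iff {a : F[G]} :
    a ∈ LinearMap.ker (ad F F[G]) ↔ ∀ g h : G, IsConj g h → a.coeff g = a.coeff h := by
  have hcomm : a ∈ LinearMap.ker (ad F F[G]) ↔ ∀ c : G, a * single c 1 = single c 1 * a := by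
    refine ⟨fun ha c => ?_, fun ha => ?_⟩
    · simpa [ad_apply, sub_eq_zero] using LinearMap.congr_fun ha (single c 1)
    · exact (MonoidAlgebra.basis G F).ext fun c => by simp [ad_apply, ha c]
  rw [hcomm]
  constructor
  · intro ha g h hgh
    obtain ⟨c, rfl⟩ := isConj_iff.mp hgh
    simpa using (congrArg (fun x : F[G] => x.coeff (c * g)) (ha c)).symm
  · intro ha c
    ext h
    simpa using ha _ _ (isConj_iff.mpr ⟨c⁻¹, by group⟩)

variable [Finite G]

noncomputable def ofConjClassesFun : (ConjClasses G → F) →ₗ[F] F[G] :=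
  (coeffLinearEquiv F).symm.toLinearMap ∘ₗ
    (Finsupp.linearEquivFunOnFinite F F G).symm.toLinearMap ∘ₗ LinearMap.funLeft F F ConjClasses.mk

variable {F G} in
@[simp]
lemma coeff_ofConjClassesFun (f : ConjClasses G → F) (g : G) :
    (ofConjClassesFun F G f).coeff g = f (ConjClasses.mk g) := rfl

lemma ofConjClassesFun_injective : Function.Injective (ofConjClassesFun F G) := by
  simpa [ofConjClassesFun] using
    LinearMap.funLeft_injective_of_surjective F F _ ConjClasses.mk_surjective

lemma range_ofConjClassesFun :
    LinearMap.range (ofConjClassesFun F G) = LinearMap.ker (ad F F[G]) := by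
  ext a
  rw [mem_ker_ad_iff]
  constructor
  · rintro ⟨f, rfl⟩ g h hgh
    simp [ConjClasses.mk_eq_mk_iff_isConj.mpr hgh]
  · intro ha
    exact ⟨Quotient.lift a.coeff ha, by ext g; rfl⟩

end CommRing

variable (F G : Type) [Field F] [Group G] [Finite G]

lemma finrank_ker_ad :
    Module.finrank F (LinearMap.ker (ad F F[G])) = Nat.card (ConjClasses G) := by
  have := Fintype.ofFinite (ConjClasses G)
  rw [← range_ofConjClassesFun, LinearMap.finrank_range_of_inj (ofConjClassesFun_injective F G),
    Module.finrank_pi, Nat.card_eq_fintype_card]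

theorem finrank_innDer :
    Module.finrank F (innDer F G) = Nat.card G - Nat.card (ConjClasses G) := by
  rw [innDer_eq_range_ad, ← finrank_ker_ad F G, ← Module.finrank_eq_nat_card_basis (basis G F)]
  exact Nat.eq_sub_of_add_eq (LinearMap.finrank_range_add_finrank_ker _)

end MonoidAlgebra

namespace DihedralGroup

lemma isConj_r_neg {n : ℕ} (i : ZMod n) : IsConj (r (-i)) (r i) :=
  isConj_iff.mpr ⟨sr 0, by simp [inv_sr, sr_mul_r, sr_mul_sr]⟩

lemma isConj_sr_add_two_mul {n : ℕ} (i a : ZMod n) : IsConj (sr (i + 2 * a)) (sr i) :=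
  isConj_iff.mpr ⟨r a, by rw [inv_r, r_mul_sr, sr_mul_r]; ring_nf⟩

variable (n : ℕ) [NeZero n]

def conjClassIndex : DihedralGroup (2 * n) → Fin (n + 1) ⊕ ZMod 2
  | r i => .inl ⟨i.valMinAbs.natAbs, by have := ZMod.natAbs_valMinAbs_le i; omega⟩
  | sr i => .inr (ZMod.castHom (dvd_mul_right 2 n) (ZMod 2) i)

def conjClassRep : Fin (n + 1) ⊕ ZMod 2 → DihedralGroup (2 * n)
  | .inl j => r (j : ℕ)
  | .inr e => sr (e.val : ℕ)

variable {n}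

lemma conjClassIndex_mul_comm (x y : DihedralGroup (2 * n)) :
    conjClassIndex n (x * y) = conjClassIndex n (y * x) := by
  have sub_eq_add : ∀ a b : ZMod 2, a - b = a + b := by decide
  rcases x with i | i <;> rcases y with j | j
  · rw [r_mul_r, r_mul_r, add_comm i j]
  · simp [conjClassIndex, r_mul_sr, sr_mul_r, sub_eq_add]
  · simp [conjClassIndex, r_mul_sr, sr_mul_r, sub_eq_add]
  · simp only [conjClassIndex, sr_mul_sr, ← neg_sub j i, ZMod.natAbs_valMinAbs_neg]

lemma conjClassIndex_eq_of_isConj {g h : DihedralGroup (2 * n)} (hgh : IsConj g h) :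
    conjClassIndex n g = conjClassIndex n h := by
  obtain ⟨c, rfl⟩ := isConj_iff.mp hgh
  rw [mul_assoc, conjClassIndex_mul_comm, inv_mul_cancel_right]

lemma conjClassIndex_conjClassRep (j : Fin (n + 1) ⊕ ZMod 2) :
    conjClassIndex n (conjClassRep n j) = j := by
  rcases j with j | e
  · have hj : (j : ℕ) ≤ 2 * n / 2 := by omega
    simp [conjClassIndex, conjClassRep, ZMod.valMinAbs_natCast_of_le_half hj]
  · simp [conjClassIndex, conjClassRep]

lemma isConj_conjClassRep_conjClassIndex (g : DihedralGroup (2 * n)) :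
    IsConj (conjClassRep n (conjClassIndex n g)) g := by
  rcases g with i | i
  · simp only [conjClassIndex, conjClassRep, ZMod.natCast_natAbs_valMinAbs]
    split_ifs
    · rfl
    · exact isConj_r_neg i
  · have he : (ZMod.castHom (dvd_mul_right 2 n) (ZMod 2) i).val = i.val % 2 := by
      rw [ZMod.castHom_apply, ZMod.cast_eq_val, ZMod.val_natCast]
    have hi : ((i.val % 2 : ℕ) : ZMod (2 * n)) + 2 * ((i.val / 2 : ℕ) : ZMod (2 * n)) = i := by
      conv_rhs => rw [← ZMod.natCast_zmod_val i, ← Nat.mod_add_div i.val 2]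
      push_cast
      rfl
    simp only [conjClassIndex, conjClassRep, he]
    simpa only [hi] using
      (isConj_sr_add_two_mul ((i.val % 2 : ℕ) : ZMod (2 * n)) (i.val / 2 : ℕ)).symm

variable (n) in
def conjClassesEquiv : ConjClasses (DihedralGroup (2 * n)) ≃ Fin (n + 1) ⊕ ZMod 2 where
  toFun := Quotient.lift (conjClassIndex n) fun _ _ => conjClassIndex_eq_of_isConj
  invFun j := ConjClasses.mk (conjClassRep n j)
  left_inv := by
    rintro ⟨g⟩
    exact ConjClasses.mk_eq_mk_iff_isConj.mpr (isConj_conjClassRep_conjClassIndex g)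
  right_inv := conjClassIndex_conjClassRep

lemma nat_card_conjClasses_two_mul : Nat.card (ConjClasses (DihedralGroup (2 * n))) = n + 3 := by
  rw [Nat.card_congr (conjClassesEquiv n), Nat.card_sum, Nat.card_eq_fintype_card,
    Fintype.card_fin, Nat.card_zmod]

end DihedralGroup

theorem innDer_finrank_dihedral_general
    (n : ℕ) (hn : 0 < n)
    (F : Type) [Field F] :
    Module.finrank F ↥(innDer F (DihedralGroup (2 * n))) = 3 * n - 3 := by
  have : NeZero n := ⟨hn.ne'⟩
  rw [MonoidAlgebra.finrank_innDer, DihedralGroup.nat_card,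
    DihedralGroup.nat_card_conjClasses_two_mul]
  omega

/-- For the finite field `F` with `2^m` elements and the dihedral group `D_{2n}` of order
`4n`, the space of inner derivations of `F[D_{2n}]` has dimension `3n − 3`. -/
theorem innDer_finrank_dihedral
    (n m : ℕ) (hn : 0 < n) (hm : 0 < m)
    (F : Type) [Field F] [Fintype F] (hF : Fintype.card F = 2 ^ m) :
    Module.finrank F ↥(innDer F (DihedralGroup (2 * n))) = 3 * n - 3 :=
  innDer_finrank_dihedral_general n hn F
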